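/- Let k_1, k_2 ≥ 4 be even integers. The following sequence of ℚ-vector spaces is exact: 0 → V_{k_1−1,k_2−1}^ℚ[I_D] → V_{k_1,k_2}^ℚ[I_D] → W_{k_1+k_2−2}^ℚ → 0, where the first map is multiplication by (X_1−X_2), i.e. P(X_1,X_2) ↦ (X_1−X_2)·P(X_1,X_2), and the second map is restriction to the diagonal, i.e. P(X_1,X_2) ↦ P(Z,Z) as a polynomial in the single variable Z. -/

import Mathlib

open MvPolynomial

noncomputable section

/-- `S = (0 −1; 1 0)`. -/
def Smat : Matrix (Fin 2) (Fin 2) ℤ := !![0, -1; 1, 0]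

/-- `T = (1 1; 0 1)`. -/
def Tmat : Matrix (Fin 2) (Fin 2) ℤ := !![1, 1; 0, 1]

/-- `U = (0 1; −1 1)`. -/
def Umat : Matrix (Fin 2) (Fin 2) ℤ := !![0, 1; -1, 1]

variable {R : Type*} [CommRing R]

/-- The slash action of a pair `(A,B)` of integral `2×2` matrices on a polynomial in the
two variables `X 0, X 1`, with weight exponents `w₁` on `X 0` and `w₂` on `X 1`:
monomials `X 0^{e₀} X 1^{e₁}` are sent to
`(a X₀+b)^{e₀}(c X₀+d)^{w₁−e₀} · (a' X₁+b')^{e₁}(c' X₁+d')^{w₂−e₁}`; for polynomials of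
degree `≤ wⱼ` in `X j` this is `(cX₀+d)^{w₁}(c'X₁+d')^{w₂} P((aX₀+b)/(cX₀+d),(a'X₁+b')/(c'X₁+d'))`. -/
def slash2 (w₁ w₂ : ℕ) (A B : Matrix (Fin 2) (Fin 2) ℤ) (P : MvPolynomial (Fin 2) R) :
    MvPolynomial (Fin 2) R :=
  ∑ e ∈ P.support, MvPolynomial.C (MvPolynomial.coeff e P) *
    ((C ((A 0 0 : ℤ) : R) * X 0 + C ((A 0 1 : ℤ) : R)) ^ (e 0) *
      (C ((A 1 0 : ℤ) : R) * X 0 + C ((A 1 1 : ℤ) : R)) ^ (w₁ - e 0)) *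
    ((C ((B 0 0 : ℤ) : R) * X 1 + C ((B 0 1 : ℤ) : R)) ^ (e 1) *
      (C ((B 1 0 : ℤ) : R) * X 1 + C ((B 1 1 : ℤ) : R)) ^ (w₂ - e 1))

/-- The slash action of a single matrix `A` on the variable `X j` (with weight exponent `w`),
leaving the other variable untouched. -/
def slashVar (j : Fin 2) (w : ℕ) (A : Matrix (Fin 2) (Fin 2) ℤ)
    (P : MvPolynomial (Fin 2) R) : MvPolynomial (Fin 2) R :=
  if j = 0 then slash2 w 0 A 1 P else slash2 0 w 1 A P

/-- `P ∈ V_{k₁,k₂}`: degrees at most `k₁−2` in `X 0` and `k₂−2` in `X 1`. -/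
def memV2 (k₁ k₂ : ℕ) (P : MvPolynomial (Fin 2) R) : Prop :=
  MvPolynomial.degreeOf 0 P ≤ k₁ - 2 ∧ MvPolynomial.degreeOf 1 P ≤ k₂ - 2

/-- `P` involves only the variable `X j`. -/
def onlyVar (j : Fin 2) (P : MvPolynomial (Fin 2) R) : Prop :=
  ∀ i : Fin 2, i ≠ j → MvPolynomial.degreeOf i P = 0

/-- `P` is an element of `W_k` in the single variable `X j`: a polynomial of degree `≤ k−2`
in `X j` alone with `P|_{1+S} = 0` and `P|_{1+U+U²} = 0`. -/
def memW1 (j : Fin 2) (k : ℕ) (P : MvPolynomial (Fin 2) R) : Prop :=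
  onlyVar j P ∧ MvPolynomial.degreeOf j P ≤ k - 2 ∧
    P + slashVar j (k - 2) Smat P = 0 ∧
    P + slashVar j (k - 2) Umat P + slashVar j (k - 2) (Umat * Umat) P = 0

/-- `P ∈ V_{k₁,k₂}[I_D]`: `P|_{(1,1)+(S,S)} = 0` and `P|_{(1,1)+(U,U)+(U²,U²)} = 0`. -/
def memVID (k₁ k₂ : ℕ) (P : MvPolynomial (Fin 2) R) : Prop :=
  memV2 k₁ k₂ P ∧
    P + slash2 (k₁ - 2) (k₂ - 2) Smat Smat P = 0 ∧
    P + slash2 (k₁ - 2) (k₂ - 2) Umat Umat P +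
      slash2 (k₁ - 2) (k₂ - 2) (Umat * Umat) (Umat * Umat) P = 0

/-- `P ∈ W_{k₁,k₂}`: the five defining relations. -/
def memW2 (k₁ k₂ : ℕ) (P : MvPolynomial (Fin 2) R) : Prop :=
  memV2 k₁ k₂ P ∧
    (P + slash2 (k₁-2) (k₂-2) Smat 1 P + slash2 (k₁-2) (k₂-2) 1 Smat P +
      slash2 (k₁-2) (k₂-2) Smat Smat P = 0) ∧
    (P + slash2 (k₁-2) (k₂-2) Umat 1 P + slash2 (k₁-2) (k₂-2) (Umat*Umat) 1 P +
      slash2 (k₁-2) (k₂-2) Smat Smat P + slash2 (k₁-2) (k₂-2) (Smat*Umat) Smat P +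
      slash2 (k₁-2) (k₂-2) (Smat*(Umat*Umat)) Smat P = 0) ∧
    (P + slash2 (k₁-2) (k₂-2) 1 Umat P + slash2 (k₁-2) (k₂-2) 1 (Umat*Umat) P +
      slash2 (k₁-2) (k₂-2) Smat Smat P + slash2 (k₁-2) (k₂-2) Smat (Smat*Umat) P +
      slash2 (k₁-2) (k₂-2) Smat (Smat*(Umat*Umat)) P = 0) ∧
    (P + slash2 (k₁-2) (k₂-2) 1 Umat P + slash2 (k₁-2) (k₂-2) 1 (Umat*Umat) P +
      slash2 (k₁-2) (k₂-2) Umat 1 P + slash2 (k₁-2) (k₂-2) Umat Umat P +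
      slash2 (k₁-2) (k₂-2) Umat (Umat*Umat) P + slash2 (k₁-2) (k₂-2) (Umat*Umat) 1 P +
      slash2 (k₁-2) (k₂-2) (Umat*Umat) Umat P +
      slash2 (k₁-2) (k₂-2) (Umat*Umat) (Umat*Umat) P = 0) ∧
    (slash2 (k₁-2) (k₂-2) Smat Smat P + slash2 (k₁-2) (k₂-2) Smat (Smat*(Umat*Umat)) P +
      slash2 (k₁-2) (k₂-2) (Smat*(Umat*Umat)) (Smat*(Umat*Umat)) P +
      slash2 (k₁-2) (k₂-2) 1 (Umat*Umat) P - slash2 (k₁-2) (k₂-2) Umat Umat P = 0)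

/-- Restriction to the diagonal: `P(X₁,X₂) ↦ P(Z,Z)`, the single variable `Z` being `X 0`. -/
def diagRes (P : MvPolynomial (Fin 2) ℚ) : MvPolynomial (Fin 2) ℚ :=
  MvPolynomial.rename (fun _ => (0 : Fin 2)) P

/-!
Writing `X₁ = x₁/y₁` and `X₂ = x₂/y₂`, a polynomial of degrees at most `(w₁, w₂)` homogenizes to
a polynomial of bidegree `(w₁, w₂)` in `(x₁, y₁, x₂, y₂)`. There the slash action of `(A, B)` is
the linear substitution of the coordinates by `A` and `B`, and restriction to the diagonal is the
substitution `(x₂, y₂) ↦ (x₁, y₁)`, which commutes with the diagonal action.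

`X₁ - X₂` homogenizes to `x₁y₂ - y₁x₂`, which is invariant under `SL₂(ℤ)`. Hence multiplication
by `X₁ - X₂` commutes with the slash action, and since `ℚ[X₁, X₂]` is a domain it maps
`V_{k₁-1,k₂-1}[I_D]` bijectively onto the multiples of `X₁ - X₂` in `V_{k₁,k₂}[I_D]`, which are
its elements vanishing on the diagonal.

For surjectivity, the polarization `F ↦ [T^b] F(x₁ + T x₂, y₁ + T y₂)` maps binary forms of
degree `a + b` equivariantly to forms of bidegree `(a, b)`. On the diagonal it returns
`[T^b] (1 + T)^(a+b) F = binom(a+b, b) F`, so after dividing by the binomial coefficient it is an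
equivariant section of the restriction.
-/

namespace MvPolynomial

theorem IsWeightedHomogeneous.aeval_mem {R σ M N S : Type*} [CommSemiring R] [CommSemiring S]
    [Algebra R S] [AddCommMonoid M] [AddCommMonoid N] {w : σ → M} {φ : MvPolynomial σ R} {m : M}
    (hφ : φ.IsWeightedHomogeneous w m) (𝒜 : N → Submodule R S) [SetLike.GradedMonoid 𝒜]
    (L : M →+ N) {g : σ → S} (hg : ∀ i, g i ∈ 𝒜 (L (w i))) : aeval g φ ∈ 𝒜 (L m) := by
  induction hφ using IsWeightedHomogeneous.induction_on with
  | zero => simp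
  | add p q _ _ hp hq => rw [map_add]; exact add_mem hp hq
  | monomial d r hd =>
    rw [aeval_monomial, ← Algebra.smul_def, ← hd, Finsupp.weight_apply, map_finsuppSum]
    refine Submodule.smul_mem _ r ?_
    simp only [map_nsmul]
    exact SetLike.prod_pow_mem_graded _ _ _ _ fun i _ => hg i

theorem monomial_fin_four {R : Type*} [CommSemiring R] (d : Fin 4 →₀ ℕ) (c : R) :
    monomial d c = C c * X 0 ^ d 0 * X 1 ^ d 1 * X 2 ^ d 2 * X 3 ^ d 3 := by
  rw [monomial_eq, Finsupp.prod_pow, Fin.prod_univ_four]; ring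

end MvPolynomial

namespace Polynomial

variable {R M A : Type*} [CommSemiring R] [AddCommMonoid M] [CommSemiring A] [Algebra R A]

def coeffGraded (𝒜 : M → Submodule R A) (δ : M) (m : M) : Submodule R A[X] where
  carrier := {p | ∀ j : ℕ, p.coeff j ∈ 𝒜 (m + j • δ)}
  add_mem' hp hq j := by rw [coeff_add]; exact add_mem (hp j) (hq j)
  zero_mem' j := by simp
  smul_mem' c p hp j := by rw [coeff_smul]; exact Submodule.smul_mem _ c (hp j)

variable {𝒜 : M → Submodule R A} {δ m : M}

instance [SetLike.GradedMonoid 𝒜] : SetLike.GradedMonoid (coeffGraded 𝒜 δ) where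
  one_mem j := by
    rw [coeff_one]
    split_ifs with h
    · subst h; simpa using SetLike.one_mem_graded 𝒜
    · exact zero_mem _
  mul_mem m m' p q hp hq j := by
    rw [coeff_mul]
    refine sum_mem fun x hx => ?_
    rw [Finset.HasAntidiagonal.mem_antidiagonal] at hx
    convert SetLike.mul_mem_graded (hp x.1) (hq x.2) using 2
    rw [← hx, add_smul]; abel

theorem C_mem_coeffGraded {u : A} (hu : u ∈ 𝒜 m) : C u ∈ coeffGraded 𝒜 δ m := by
  intro j
  rw [coeff_C]
  split_ifs with h
  · subst h; simpa using hu
  · exact zero_mem _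

theorem C_add_X_mul_C_mem_coeffGraded {u v : A} (hu : u ∈ 𝒜 m) (hv : v ∈ 𝒜 (m + δ)) :
    C u + X * C v ∈ coeffGraded 𝒜 δ m := by
  rintro (_ | _ | j) <;> simp [coeff_C, hu, hv]

end Polynomial

section Bihomogeneous

variable {w w₁ w₂ : ℕ}

/-- `X 0, X 1` are homogeneous coordinates `(x₁, y₁)` of `X₁`, and `X 2, X 3` those of `X₂`.
The degrees are integers because the polarization variable has degree `(-1, 1)`. -/
def bidegree : Fin 4 → ℤ × ℤ := ![(1, 0), (1, 0), (0, 1), (0, 1)]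

abbrev IsBihomogeneous (w₁ w₂ : ℕ) (F : MvPolynomial (Fin 4) R) : Prop :=
  F.IsWeightedHomogeneous bidegree ((w₁ : ℤ), (w₂ : ℤ))

theorem weight_bidegree (d : Fin 4 →₀ ℕ) :
    Finsupp.weight bidegree d = (((d 0 + d 1 : ℕ) : ℤ), ((d 2 + d 3 : ℕ) : ℤ)) := by
  ext <;> simp [Finsupp.weight_apply, Finsupp.sum_fintype, Fin.sum_univ_four, bidegree]

theorem exponents_of_weight_bidegree {d : Fin 4 →₀ ℕ}
    (hd : Finsupp.weight bidegree d = ((w₁ : ℤ), (w₂ : ℤ))) :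
    d 0 + d 1 = w₁ ∧ d 2 + d 3 = w₂ := by
  rw [weight_bidegree, Prod.mk.injEq] at hd
  exact ⟨by exact_mod_cast hd.1, by exact_mod_cast hd.2⟩

theorem IsBihomogeneous.smul {F : MvPolynomial (Fin 4) R} (hF : IsBihomogeneous w₁ w₂ F)
    (c : R) : IsBihomogeneous w₁ w₂ (c • F) := by
  rw [smul_eq_C_mul]
  exact hF.C_mul c

/-- Truncated subtraction, as in `slash2`: exponents beyond `w₁`, `w₂` do not homogenize. -/
def homogenizeExp (w₁ w₂ : ℕ) (e : Fin 2 →₀ ℕ) : Fin 4 →₀ ℕ :=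
  Finsupp.equivFunOnFinite.symm ![e 0, w₁ - e 0, e 1, w₂ - e 1]

def homogenize (w₁ w₂ : ℕ) : MvPolynomial (Fin 2) R →ₗ[R] MvPolynomial (Fin 4) R :=
  AddMonoidAlgebra.mapDomainLinearMap R R (homogenizeExp w₁ w₂)

theorem homogenize_monomial (e : Fin 2 →₀ ℕ) (c : R) :
    homogenize w₁ w₂ (monomial e c) = monomial (homogenizeExp w₁ w₂ e) c := by
  rw [← single_eq_monomial, ← single_eq_monomial]
  exact AddMonoidAlgebra.mapDomainLinearMap_single ..

def dehomogenize : MvPolynomial (Fin 4) R →ₐ[R] MvPolynomial (Fin 2) R :=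
  aeval ![X 0, 1, X 1, 1]

theorem dehomogenize_monomial (d : Fin 4 →₀ ℕ) (c : R) :
    dehomogenize (monomial d c) = monomial (Finsupp.equivFunOnFinite.symm ![d 0, d 2]) c := by
  rw [monomial_fin_four, monomial_fin_two]
  simp [dehomogenize]

theorem dehomogenize_homogenize (P : MvPolynomial (Fin 2) R) :
    dehomogenize (homogenize w₁ w₂ P) = P := by
  induction P using MvPolynomial.induction_on' with
  | monomial e c =>
    rw [homogenize_monomial, dehomogenize_monomial]
    congr
    ext i; fin_cases i <;> simp [homogenizeExp]
  | add p q hp hq => rw [map_add, map_add, hp, hq]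

theorem isBihomogeneous_homogenize {P : MvPolynomial (Fin 2) R} (h₀ : degreeOf 0 P ≤ w₁)
    (h₁ : degreeOf 1 P ≤ w₂) : IsBihomogeneous w₁ w₂ (homogenize w₁ w₂ P) := by
  rw [as_sum P, map_sum]
  refine IsWeightedHomogeneous.sum _ _ _ fun e he => ?_
  rw [homogenize_monomial]
  refine isWeightedHomogeneous_monomial _ _ _ ?_
  have := (monomial_le_degreeOf 0 he).trans h₀
  have := (monomial_le_degreeOf 1 he).trans h₁
  rw [weight_bidegree]
  simp [homogenizeExp]
  omega

theorem homogenize_dehomogenize {F : MvPolynomial (Fin 4) R} (hF : IsBihomogeneous w₁ w₂ F) :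
    homogenize w₁ w₂ (dehomogenize F) = F := by
  induction hF using IsWeightedHomogeneous.induction_on with
  | zero => simp
  | add p q _ _ hp hq => rw [map_add, map_add, hp, hq]
  | monomial d r hd =>
    obtain ⟨h₁, h₂⟩ := exponents_of_weight_bidegree hd
    rw [dehomogenize_monomial, homogenize_monomial]
    congr
    ext i; fin_cases i <;> simp [homogenizeExp] <;> omega

theorem homogenize_eq_of_dehomogenize_eq {F : MvPolynomial (Fin 4) R}
    {P : MvPolynomial (Fin 2) R} (hF : IsBihomogeneous w₁ w₂ F) (h : dehomogenize F = P) :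
    homogenize w₁ w₂ P = F :=
  h ▸ homogenize_dehomogenize hF

theorem degreeOf_dehomogenize_le {F : MvPolynomial (Fin 4) R} (hF : IsBihomogeneous w₁ w₂ F) :
    degreeOf 0 (dehomogenize F) ≤ w₁ ∧ degreeOf 1 (dehomogenize F) ≤ w₂ := by
  induction hF using IsWeightedHomogeneous.induction_on with
  | zero => simp
  | add p q _ _ hp hq =>
    rw [map_add]
    exact ⟨(degreeOf_add_le _ _ _).trans (max_le hp.1 hq.1),
      (degreeOf_add_le _ _ _).trans (max_le hp.2 hq.2)⟩
  | monomial d r hd =>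
    obtain ⟨h₁, h₂⟩ := exponents_of_weight_bidegree hd
    rw [dehomogenize_monomial]
    constructor <;>
    · refine degreeOf_le_iff.2 fun e he => ?_
      rw [Finset.mem_singleton.1 (support_monomial_subset he)]
      simp; omega

def matrixSubst (A B : Matrix (Fin 2) (Fin 2) ℤ) :
    MvPolynomial (Fin 4) R →ₐ[R] MvPolynomial (Fin 4) R :=
  aeval ![C ((A 0 0 : ℤ) : R) * X 0 + C ((A 0 1 : ℤ) : R) * X 1,
    C ((A 1 0 : ℤ) : R) * X 0 + C ((A 1 1 : ℤ) : R) * X 1,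
    C ((B 0 0 : ℤ) : R) * X 2 + C ((B 0 1 : ℤ) : R) * X 3,
    C ((B 1 0 : ℤ) : R) * X 2 + C ((B 1 1 : ℤ) : R) * X 3]

theorem slash2_eq_dehomogenize (A B : Matrix (Fin 2) (Fin 2) ℤ) (P : MvPolynomial (Fin 2) R) :
    slash2 w₁ w₂ A B P = dehomogenize (matrixSubst A B (homogenize w₁ w₂ P)) := by
  conv_rhs => rw [as_sum P]
  rw [map_sum, map_sum, map_sum, slash2]
  refine Finset.sum_congr rfl fun e _ => ?_
  rw [homogenize_monomial, monomial_fin_four]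
  simp [matrixSubst, dehomogenize, homogenizeExp]
  ring

theorem IsBihomogeneous.matrixSubst {F : MvPolynomial (Fin 4) R} (hF : IsBihomogeneous w₁ w₂ F)
    (A B : Matrix (Fin 2) (Fin 2) ℤ) : IsBihomogeneous w₁ w₂ (matrixSubst A B F) := by
  have := WeightedHomogeneousSubmodule.gradedMonoid (R := R) (w := bidegree)
  refine (mem_weightedHomogeneousSubmodule _ _ _ _).1
    (hF.aeval_mem (weightedHomogeneousSubmodule R bidegree) (AddMonoidHom.id _) fun i => ?_)
  fin_cases i <;>
    exact ((isWeightedHomogeneous_X R bidegree _).C_mul _).add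
      ((isWeightedHomogeneous_X R bidegree _).C_mul _)

theorem matrixSubst_congr_right_of_isBihomogeneous {F : MvPolynomial (Fin 4) R}
    (hF : IsBihomogeneous w 0 F) (A B B' : Matrix (Fin 2) (Fin 2) ℤ) :
    matrixSubst A B F = matrixSubst A B' F := by
  induction hF using IsWeightedHomogeneous.induction_on with
  | zero => simp
  | add p q _ _ hp hq => rw [map_add, map_add, hp, hq]
  | monomial d r hd =>
    obtain ⟨-, h⟩ := exponents_of_weight_bidegree hd
    rw [monomial_fin_four, show d 2 = 0 by omega, show d 3 = 0 by omega]
    simp [matrixSubst]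

theorem slashVar_eq_dehomogenize (A : Matrix (Fin 2) (Fin 2) ℤ) {P : MvPolynomial (Fin 2) R}
    (h₀ : degreeOf 0 P ≤ w) (h₁ : degreeOf 1 P ≤ 0) :
    slashVar 0 w A P = dehomogenize (matrixSubst A A (homogenize w 0 P)) := by
  rw [slashVar, if_pos rfl, slash2_eq_dehomogenize,
    matrixSubst_congr_right_of_isBihomogeneous (isBihomogeneous_homogenize h₀ h₁) A 1 A]

theorem matrixSubst_det (A : Matrix (Fin 2) (Fin 2) ℤ) :
    matrixSubst A A (X 0 * X 3 - X 1 * X 2 : MvPolynomial (Fin 4) R) =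
      C ((A.det : ℤ) : R) * (X 0 * X 3 - X 1 * X 2) := by
  simp [matrixSubst, Matrix.det_fin_two]
  ring

theorem slash2_X_sub_X_mul {A : Matrix (Fin 2) (Fin 2) ℤ} (hA : A.det = 1)
    {P : MvPolynomial (Fin 2) R} (h₀ : degreeOf 0 P ≤ w₁) (h₁ : degreeOf 1 P ≤ w₂) :
    slash2 (w₁ + 1) (w₂ + 1) A A ((X 0 - X 1) * P) = (X 0 - X 1) * slash2 w₁ w₂ A A P := by
  have hD : IsBihomogeneous 1 1 (X 0 * X 3 - X 1 * X 2 : MvPolynomial (Fin 4) R) :=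
    ((isWeightedHomogeneous_X R bidegree 0).mul (isWeightedHomogeneous_X R bidegree 3)).sub
      ((isWeightedHomogeneous_X R bidegree 1).mul (isWeightedHomogeneous_X R bidegree 2))
  have hhom : homogenize (w₁ + 1) (w₂ + 1) ((X 0 - X 1) * P) =
      (X 0 * X 3 - X 1 * X 2) * homogenize w₁ w₂ P := by
    refine homogenize_eq_of_dehomogenize_eq ?_ ?_
    · convert hD.mul (isBihomogeneous_homogenize h₀ h₁) using 1
      simp [add_comm]
    · rw [map_mul, dehomogenize_homogenize]
      simp [dehomogenize]
  rw [slash2_eq_dehomogenize, slash2_eq_dehomogenize, hhom, map_mul, matrixSubst_det, hA,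
    map_mul, map_mul]
  simp [dehomogenize]

def diagSubst : MvPolynomial (Fin 4) R →ₐ[R] MvPolynomial (Fin 4) R := aeval ![X 0, X 1, X 0, X 1]

theorem IsBihomogeneous.diagSubst {F : MvPolynomial (Fin 4) R} (hF : IsBihomogeneous w₁ w₂ F) :
    IsBihomogeneous (w₁ + w₂) 0 (diagSubst F) := by
  have := WeightedHomogeneousSubmodule.gradedMonoid (R := R) (w := bidegree)
  let L : ℤ × ℤ →+ ℤ × ℤ :=
    (AddMonoidHom.inl ℤ ℤ).comp (AddMonoidHom.fst ℤ ℤ + AddMonoidHom.snd ℤ ℤ)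
  have h := hF.aeval_mem (weightedHomogeneousSubmodule R bidegree) L
    (g := ![X 0, X 1, X 0, X 1]) fun i => by
      fin_cases i <;> simp [L, bidegree] <;> exact isWeightedHomogeneous_X R bidegree _
  rw [mem_weightedHomogeneousSubmodule] at h
  convert h using 1
  · rfl
  · simp [L]

theorem matrixSubst_diagSubst (A : Matrix (Fin 2) (Fin 2) ℤ) (F : MvPolynomial (Fin 4) R) :
    matrixSubst A A (diagSubst F) = diagSubst (matrixSubst A A F) := by
  rw [← AlgHom.comp_apply, ← AlgHom.comp_apply]
  congr 1
  refine algHom_ext fun i => ?_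
  fin_cases i <;> simp [matrixSubst, diagSubst]

end Bihomogeneous

section Polarization

def polarizationSubst : MvPolynomial (Fin 4) R →ₐ[R] Polynomial (MvPolynomial (Fin 4) R) :=
  aeval ![Polynomial.C (X 0) + Polynomial.X * Polynomial.C (X 2),
    Polynomial.C (X 1) + Polynomial.X * Polynomial.C (X 3), Polynomial.C (X 2), Polynomial.C (X 3)]

def polarization (b : ℕ) : MvPolynomial (Fin 4) R →ₗ[R] MvPolynomial (Fin 4) R :=
  (Polynomial.lcoeff (MvPolynomial (Fin 4) R) b).restrictScalars R ∘ₗ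
    polarizationSubst.toLinearMap

theorem polarization_apply (b : ℕ) (F : MvPolynomial (Fin 4) R) :
    polarization b F = (polarizationSubst F).coeff b := rfl

theorem IsBihomogeneous.polarization {a b : ℕ} {F : MvPolynomial (Fin 4) R}
    (hF : IsBihomogeneous (a + b) 0 F) : IsBihomogeneous a b (polarization b F) := by
  have := WeightedHomogeneousSubmodule.gradedMonoid (R := R) (w := bidegree)
  have hX (i : Fin 4) : X i ∈ weightedHomogeneousSubmodule R bidegree (bidegree i) :=
    isWeightedHomogeneous_X R bidegree i
  have h := hF.aeval_mem
    (Polynomial.coeffGraded (weightedHomogeneousSubmodule R bidegree) (-1, 1))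
    (AddMonoidHom.id _) (g := ![_, _, _, _]) fun i => by
      fin_cases i
      · exact Polynomial.C_add_X_mul_C_mem_coeffGraded (hX 0) (hX 2)
      · exact Polynomial.C_add_X_mul_C_mem_coeffGraded (hX 1) (hX 3)
      · exact Polynomial.C_mem_coeffGraded (hX 2)
      · exact Polynomial.C_mem_coeffGraded (hX 3)
  convert (mem_weightedHomogeneousSubmodule _ _ _ _).1 (h b) using 1
  · rfl
  · refine Prod.ext ?_ ?_ <;> simp

theorem matrixSubst_polarization (A : Matrix (Fin 2) (Fin 2) ℤ) (b : ℕ)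
    (F : MvPolynomial (Fin 4) R) :
    matrixSubst A A (polarization b F) = polarization b (matrixSubst A A F) := by
  have h : (Polynomial.mapAlgHom (matrixSubst A A)).comp polarizationSubst =
      polarizationSubst.comp (matrixSubst (R := R) A A) := by
    refine algHom_ext fun i => ?_
    fin_cases i <;> simp [polarizationSubst, matrixSubst] <;> ring
  rw [polarization_apply, polarization_apply, ← AlgHom.comp_apply, ← h, AlgHom.comp_apply,
    Polynomial.coe_mapAlgHom, Polynomial.coeff_map]
  rfl

theorem diagSubst_polarization {n : ℕ} (b : ℕ) {F : MvPolynomial (Fin 4) R}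
    (hF : IsBihomogeneous n 0 F) : diagSubst (polarization b F) = n.choose b • F := by
  let scale : MvPolynomial (Fin 4) R →ₐ[R] Polynomial (MvPolynomial (Fin 4) R) :=
    aeval ![(Polynomial.X + 1) * Polynomial.C (X 0), (Polynomial.X + 1) * Polynomial.C (X 1),
      Polynomial.C (X 0), Polynomial.C (X 1)]
  have h : (Polynomial.mapAlgHom diagSubst).comp polarizationSubst = scale := by
    refine algHom_ext fun i => ?_
    fin_cases i <;> simp [scale, polarizationSubst, diagSubst] <;> ring
  have hscale : scale F = (Polynomial.X + 1) ^ n * Polynomial.C F := by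
    induction hF using IsWeightedHomogeneous.induction_on with
    | zero => simp
    | add p q _ _ hp hq => rw [map_add, hp, hq, map_add, mul_add]
    | monomial d r hd =>
      obtain ⟨h₁, h₂⟩ := exponents_of_weight_bidegree hd
      rw [monomial_fin_four, show d 2 = 0 by omega, show d 3 = 0 by omega, ← h₁]
      simp only [scale, map_mul, map_pow, aeval_C, aeval_X, Matrix.cons_val_zero,
        Matrix.cons_val_one, mul_pow, pow_zero, mul_one, pow_add, Polynomial.algebraMap_apply,
        MvPolynomial.algebraMap_eq]
      ring
  calc diagSubst (polarization b F)
      = ((Polynomial.mapAlgHom diagSubst).comp polarizationSubst F).coeff b := by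
        rw [AlgHom.comp_apply, Polynomial.coe_mapAlgHom, Polynomial.coeff_map]; rfl
    _ = n.choose b • F := by
        rw [h, hscale, Polynomial.coeff_mul_C, Polynomial.coeff_X_add_one_pow, nsmul_eq_mul]

end Polarization

section Multiplication

variable [IsDomain R] {k₁ k₂ : ℕ}

theorem degreeOf_X_sub_X (i : Fin 2) : degreeOf i (X 0 - X 1 : MvPolynomial (Fin 2) R) = 1 := by
  fin_cases i
  · rw [sub_eq_add_neg, degreeOf_add_eq_of_degreeOf_lt] <;> simp [degreeOf_X]
  · rw [sub_eq_neg_add, degreeOf_add_eq_of_degreeOf_lt] <;> simp [degreeOf_X]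

theorem X_sub_X_ne_zero : (X 0 - X 1 : MvPolynomial (Fin 2) R) ≠ 0 := fun h => by
  simpa [h] using degreeOf_X_sub_X (R := R) 0

theorem det_Smat : Smat.det = 1 := by simp [Smat, Matrix.det_fin_two_of]

theorem det_Umat : Umat.det = 1 := by simp [Umat, Matrix.det_fin_two_of]

theorem memV2_X_sub_X_mul_iff (hk₁ : 3 ≤ k₁) (hk₂ : 3 ≤ k₂) {P : MvPolynomial (Fin 2) R} :
    memV2 k₁ k₂ ((X 0 - X 1) * P) ↔ memV2 (k₁ - 1) (k₂ - 1) P := by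
  rcases eq_or_ne P 0 with rfl | hP
  · simp [memV2]
  · simp only [memV2, degreeOf_mul_eq X_sub_X_ne_zero hP, degreeOf_X_sub_X]
    omega

theorem memVID_X_sub_X_mul_iff (hk₁ : 3 ≤ k₁) (hk₂ : 3 ≤ k₂) {P : MvPolynomial (Fin 2) R} :
    memVID k₁ k₂ ((X 0 - X 1) * P) ↔ memVID (k₁ - 1) (k₂ - 1) P := by
  rw [memVID, memVID, memV2_X_sub_X_mul_iff hk₁ hk₂]
  refine and_congr_right fun ⟨h₀, h₁⟩ => ?_
  have hU₂ : (Umat * Umat).det = 1 := by rw [Matrix.det_mul, det_Umat, one_mul]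
  rw [show k₁ - 2 = k₁ - 1 - 2 + 1 by omega, show k₂ - 2 = k₂ - 1 - 2 + 1 by omega,
    slash2_X_sub_X_mul det_Smat h₀ h₁, slash2_X_sub_X_mul det_Umat h₀ h₁,
    slash2_X_sub_X_mul hU₂ h₀ h₁, ← mul_add, ← mul_add, ← mul_add,
    mul_eq_zero, mul_eq_zero, or_iff_right X_sub_X_ne_zero, or_iff_right X_sub_X_ne_zero]

end Multiplication

section Restriction

variable {w₁ w₂ : ℕ} {k₁ k₂ : ℕ}

theorem diagRes_dehomogenize (F : MvPolynomial (Fin 4) ℚ) :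
    diagRes (dehomogenize F) = dehomogenize (diagSubst F) := by
  rw [diagRes, ← AlgHom.comp_apply, ← AlgHom.comp_apply]
  congr 1
  refine algHom_ext fun i => ?_
  fin_cases i <;> simp [dehomogenize, diagSubst]

theorem homogenize_diagRes {Q : MvPolynomial (Fin 2) ℚ} (h₀ : degreeOf 0 Q ≤ w₁)
    (h₁ : degreeOf 1 Q ≤ w₂) :
    homogenize (w₁ + w₂) 0 (diagRes Q) = diagSubst (homogenize w₁ w₂ Q) :=
  homogenize_eq_of_dehomogenize_eq (isBihomogeneous_homogenize h₀ h₁).diagSubst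
    (by rw [← diagRes_dehomogenize, dehomogenize_homogenize])

theorem degreeOf_diagRes_le {Q : MvPolynomial (Fin 2) ℚ} (h₀ : degreeOf 0 Q ≤ w₁)
    (h₁ : degreeOf 1 Q ≤ w₂) :
    degreeOf 0 (diagRes Q) ≤ w₁ + w₂ ∧ degreeOf 1 (diagRes Q) ≤ 0 := by
  rw [← dehomogenize_homogenize (w₁ := w₁ + w₂) (w₂ := 0) (diagRes Q), homogenize_diagRes h₀ h₁]
  exact degreeOf_dehomogenize_le (isBihomogeneous_homogenize h₀ h₁).diagSubst

theorem diagRes_slash2 (A : Matrix (Fin 2) (Fin 2) ℤ) {Q : MvPolynomial (Fin 2) ℚ}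
    (h₀ : degreeOf 0 Q ≤ w₁) (h₁ : degreeOf 1 Q ≤ w₂) :
    diagRes (slash2 w₁ w₂ A A Q) = slashVar 0 (w₁ + w₂) A (diagRes Q) := by
  obtain ⟨hd₀, hd₁⟩ := degreeOf_diagRes_le h₀ h₁
  rw [slashVar_eq_dehomogenize A hd₀ hd₁, slash2_eq_dehomogenize, diagRes_dehomogenize,
    homogenize_diagRes h₀ h₁, matrixSubst_diagSubst]

theorem memW1_diagRes (hk₁ : 2 ≤ k₁) (hk₂ : 2 ≤ k₂) {Q : MvPolynomial (Fin 2) ℚ}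
    (hQ : memVID k₁ k₂ Q) : memW1 0 (k₁ + k₂ - 2) (diagRes Q) := by
  obtain ⟨⟨h₀, h₁⟩, hS, hU⟩ := hQ
  obtain ⟨hd₀, hd₁⟩ := degreeOf_diagRes_le h₀ h₁
  rw [memW1, show k₁ + k₂ - 2 - 2 = k₁ - 2 + (k₂ - 2) by omega]
  refine ⟨fun i hi => ?_, hd₀, ?_, ?_⟩
  · obtain rfl : i = 1 := by omega
    exact Nat.le_zero.1 hd₁
  · rw [← diagRes_slash2 Smat h₀ h₁]
    simp only [diagRes] at hS ⊢
    rw [← map_add, hS, map_zero]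
  · rw [← diagRes_slash2 Umat h₀ h₁, ← diagRes_slash2 (Umat * Umat) h₀ h₁]
    simp only [diagRes] at hU ⊢
    rw [← map_add, ← map_add, hU, map_zero]

theorem X_sub_X_dvd_sub_diagRes (Q : MvPolynomial (Fin 2) ℚ) : X 0 - X 1 ∣ Q - diagRes Q := by
  rw [← Ideal.mem_span_singleton, ← Ideal.Quotient.eq, diagRes, ← Ideal.Quotient.mkₐ_eq_mk ℚ,
    ← AlgHom.comp_apply]
  congr 1
  refine (algHom_ext fun i => ?_).symm
  fin_cases i
  · simp
  · simp [Ideal.Quotient.eq]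

theorem diagRes_eq_zero_iff {Q : MvPolynomial (Fin 2) ℚ} : diagRes Q = 0 ↔ X 0 - X 1 ∣ Q :=
  ⟨fun h => by simpa [h] using X_sub_X_dvd_sub_diagRes Q, by rintro ⟨P, rfl⟩; simp [diagRes]⟩

end Restriction

section Polarize

variable {a b : ℕ} {W : MvPolynomial (Fin 2) ℚ}

def polarize (a b : ℕ) : MvPolynomial (Fin 2) ℚ →ₗ[ℚ] MvPolynomial (Fin 2) ℚ :=
  ((a + b).choose b : ℚ)⁻¹ • (dehomogenize.toLinearMap ∘ₗ polarization b ∘ₗ homogenize (a + b) 0)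

theorem polarize_apply (W : MvPolynomial (Fin 2) ℚ) :
    polarize a b W =
      ((a + b).choose b : ℚ)⁻¹ • dehomogenize (polarization b (homogenize (a + b) 0 W)) :=
  rfl

theorem homogenize_polarize (h₀ : degreeOf 0 W ≤ a + b) (h₁ : degreeOf 1 W ≤ 0) :
    homogenize a b (polarize a b W) =
      ((a + b).choose b : ℚ)⁻¹ • polarization b (homogenize (a + b) 0 W) :=
  homogenize_eq_of_dehomogenize_eq ((isBihomogeneous_homogenize h₀ h₁).polarization.smul _)
    (by rw [map_smul, polarize_apply])

theorem degreeOf_polarize_le (h₀ : degreeOf 0 W ≤ a + b) (h₁ : degreeOf 1 W ≤ 0) :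
    degreeOf 0 (polarize a b W) ≤ a ∧ degreeOf 1 (polarize a b W) ≤ b := by
  rw [polarize_apply, ← map_smul]
  exact degreeOf_dehomogenize_le ((isBihomogeneous_homogenize h₀ h₁).polarization.smul _)

theorem slash2_polarize (A : Matrix (Fin 2) (Fin 2) ℤ) (h₀ : degreeOf 0 W ≤ a + b)
    (h₁ : degreeOf 1 W ≤ 0) :
    slash2 a b A A (polarize a b W) = polarize a b (slashVar 0 (a + b) A W) := by
  rw [slash2_eq_dehomogenize, homogenize_polarize h₀ h₁, map_smul, matrixSubst_polarization,
    slashVar_eq_dehomogenize A h₀ h₁, map_smul, polarize_apply,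
    homogenize_dehomogenize ((isBihomogeneous_homogenize h₀ h₁).matrixSubst A A)]

theorem diagRes_polarize (h₀ : degreeOf 0 W ≤ a + b) (h₁ : degreeOf 1 W ≤ 0) :
    diagRes (polarize a b W) = W := by
  rw [← dehomogenize_homogenize (w₁ := a) (w₂ := b) (polarize a b W), diagRes_dehomogenize,
    homogenize_polarize h₀ h₁, map_smul,
    diagSubst_polarization b (isBihomogeneous_homogenize h₀ h₁), ← Nat.cast_smul_eq_nsmul ℚ,
    inv_smul_smul₀ (Nat.cast_ne_zero.2 (Nat.choose_pos le_add_self).ne'),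
    dehomogenize_homogenize]

theorem exists_memVID_diagRes_eq {k₁ k₂ : ℕ} (hk₁ : 2 ≤ k₁) (hk₂ : 2 ≤ k₂)
    (hW : memW1 0 (k₁ + k₂ - 2) W) : ∃ Q, memVID k₁ k₂ Q ∧ diagRes Q = W := by
  obtain ⟨hW₁, hW₀, hS, hU⟩ := hW
  rw [show k₁ + k₂ - 2 - 2 = k₁ - 2 + (k₂ - 2) by omega] at hW₀ hS hU
  have h₁ : degreeOf 1 W ≤ 0 := (hW₁ 1 (by decide)).le
  refine ⟨polarize (k₁ - 2) (k₂ - 2) W, ⟨degreeOf_polarize_le hW₀ h₁, ?_, ?_⟩,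
    diagRes_polarize hW₀ h₁⟩
  · rw [slash2_polarize Smat hW₀ h₁, ← map_add, hS, map_zero]
  · rw [slash2_polarize Umat hW₀ h₁, slash2_polarize (Umat * Umat) hW₀ h₁, ← map_add, ← map_add,
      hU, map_zero]

end Polarize

theorem statement17 (k₁ k₂ : ℕ) (hk₁ : 4 ≤ k₁) (hk₂ : 4 ≤ k₂) :
    -- the first map is well defined
    (∀ P : MvPolynomial (Fin 2) ℚ, memVID (k₁ - 1) (k₂ - 1) P →
      memVID k₁ k₂ ((X 0 - X 1) * P)) ∧
    -- the first map is injective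
    (∀ P Q : MvPolynomial (Fin 2) ℚ, memVID (k₁ - 1) (k₂ - 1) P →
      memVID (k₁ - 1) (k₂ - 1) Q → (X 0 - X 1) * P = (X 0 - X 1) * Q → P = Q) ∧
    -- the second map is well defined
    (∀ P : MvPolynomial (Fin 2) ℚ, memVID k₁ k₂ P →
      memW1 0 (k₁ + k₂ - 2) (diagRes P)) ∧
    -- exactness in the middle
    (∀ Q : MvPolynomial (Fin 2) ℚ, memVID k₁ k₂ Q →
      (diagRes Q = 0 ↔ ∃ P : MvPolynomial (Fin 2) ℚ,
        memVID (k₁ - 1) (k₂ - 1) P ∧ Q = (X 0 - X 1) * P)) ∧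
    -- the second map is surjective
    (∀ W : MvPolynomial (Fin 2) ℚ, memW1 0 (k₁ + k₂ - 2) W →
      ∃ Q : MvPolynomial (Fin 2) ℚ, memVID k₁ k₂ Q ∧ diagRes Q = W) := by
  have hmul {P : MvPolynomial (Fin 2) ℚ} :=
    memVID_X_sub_X_mul_iff (k₁ := k₁) (k₂ := k₂) (P := P) (by omega) (by omega)
  refine ⟨fun P hP => hmul.2 hP, fun P Q _ _ h => mul_left_cancel₀ X_sub_X_ne_zero h,
    fun P hP => memW1_diagRes (by omega) (by omega) hP, fun Q hQ => ?_,
    fun W hW => exists_memVID_diagRes_eq (by omega) (by omega) hW⟩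
  rw [diagRes_eq_zero_iff]
  constructor
  · rintro ⟨P, rfl⟩
    exact ⟨P, hmul.1 hQ, rfl⟩
  · rintro ⟨P, -, rfl⟩
    exact dvd_mul_right _ _
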